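/- arXiv:1604.03999 — 2 statements merged into one kernel-verified Lean document; each statement's English description precedes it below -/
import Mathlib

section
/- In the monoid B, every non-zero element b can be written uniquely as b = v* w with v, w words in π₁, π₂ (elements of the free submonoid F generated by π₁, π₂), where for w = p₁⋯p_d one sets w* = p_d*⋯p₁*. -/
open scoped Pointwise

/-- Generators of the branch monoid `B`: π₁, π₂, their stars, and 0. -/
inductive Bgen : Type
  | pi : Fin 2 → Bgen
  | pis : Fin 2 → Bgen
  | zero : Bgen

/-- Defining relations of the branch monoid: `0·b = b·0 = 0` and `πᵢπⱼ* = δᵢⱼ`. -/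
inductive Brel : FreeMonoid Bgen → FreeMonoid Bgen → Prop
  | zero_mul (x : FreeMonoid Bgen) :
      Brel (FreeMonoid.of Bgen.zero * x) (FreeMonoid.of Bgen.zero)
  | mul_zero (x : FreeMonoid Bgen) :
      Brel (x * FreeMonoid.of Bgen.zero) (FreeMonoid.of Bgen.zero)
  | pi_pis_same (i : Fin 2) :
      Brel (FreeMonoid.of (Bgen.pi i) * FreeMonoid.of (Bgen.pis i)) 1
  | pi_pis_ne (i j : Fin 2) : i ≠ j →
      Brel (FreeMonoid.of (Bgen.pi i) * FreeMonoid.of (Bgen.pis j))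
        (FreeMonoid.of Bgen.zero)

/-- The congruence generated by the defining relations. -/
def Bcon : Con (FreeMonoid Bgen) := conGen Brel

/-- The branch monoid `B`. -/
abbrev Bmon : Type := Bcon.Quotient

/-- The absorbing element `0` of `B`. -/
def bz : Bmon := Bcon.mk' (FreeMonoid.of Bgen.zero)

/-- The image of πᵢ in `B`. -/
def bpi (i : Fin 2) : Bmon := Bcon.mk' (FreeMonoid.of (Bgen.pi i))

/-- The image of πᵢ* in `B`. -/
def bpis (i : Fin 2) : Bmon := Bcon.mk' (FreeMonoid.of (Bgen.pis i))

/-- The inclusion of the free monoid `F` on π₁, π₂ into `B`. -/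
def ιF : FreeMonoid (Fin 2) →* Bmon :=
  Bcon.mk'.comp (FreeMonoid.map Bgen.pi)

/-- The star `w*` of a word `w ∈ F`, as an element of `B`: reverse the word and
star each letter. -/
def bstar (w : FreeMonoid (Fin 2)) : Bmon :=
  Bcon.mk' (FreeMonoid.ofList (((FreeMonoid.toList w).reverse).map Bgen.pis))

theorem bz_mul (x : Bmon) : bz * x = bz := by
  induction x using Con.induction_on with
  | H x => exact Con.eq Bcon |>.2 (ConGen.Rel.of _ _ (Brel.zero_mul x))

theorem mul_bz (x : Bmon) : x * bz = bz := by
  induction x using Con.induction_on with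
  | H x => exact Con.eq Bcon |>.2 (ConGen.Rel.of _ _ (Brel.mul_zero x))

/-- The monoid `S` of subsets of `B` containing `0`, under elementwise
multiplication; the identity is `{0, 1}`. -/
def Smon : Type := {X : Set Bmon // bz ∈ X}

noncomputable instance : Monoid Smon where
  mul X Y := ⟨X.val * Y.val, ⟨bz, X.prop, bz, Y.prop, bz_mul bz⟩⟩
  one := ⟨{bz, 1}, Or.inl rfl⟩
  mul_assoc X Y Z := Subtype.ext (mul_assoc X.val Y.val Z.val)
  one_mul X := Subtype.ext <| by
    show ({bz, 1} : Set Bmon) * X.val = X.val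
    rw [Set.insert_eq, Set.union_mul, Set.singleton_mul, Set.singleton_mul]
    ext b
    constructor
    · rintro (⟨x, hx, rfl⟩ | ⟨x, hx, rfl⟩)
      · simpa [bz_mul] using X.prop
      · simpa [one_mul] using hx
    · intro hb
      exact Or.inr ⟨b, hb, one_mul b⟩
  mul_one X := Subtype.ext <| by
    show X.val * ({bz, 1} : Set Bmon) = X.val
    rw [Set.insert_eq, Set.mul_union, Set.mul_singleton, Set.mul_singleton]
    ext b
    constructor
    · rintro (⟨x, hx, rfl⟩ | ⟨x, hx, rfl⟩)
      · simpa [mul_bz] using X.prop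
      · simpa [mul_one] using hx
    · intro hb
      exact Or.inr ⟨b, hb, mul_one b⟩

theorem Smon_mul_val (X Y : Smon) : (X * Y).val = X.val * Y.val := rfl

theorem Smon_one_val : (1 : Smon).val = {bz, 1} := rfl

/-- The element `{0, πᵢ}` of `S`. -/
def sπ (i : Fin 2) : Smon := ⟨{bz, bpi i}, Or.inl rfl⟩

/-- The element `{0, πᵢ*}` of `S`. -/
def sπs (i : Fin 2) : Smon := ⟨{bz, bpis i}, Or.inl rfl⟩

/-- The CQP operation on `S`: `Σ(X, Y) = π₁* X ∪ π₂* Y`. -/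
def SgS (X Y : Smon) : Smon :=
  ⟨({bz, bpis 0} : Set Bmon) * X.val ∪ ({bz, bpis 1} : Set Bmon) * Y.val,
    Or.inl ⟨bz, Or.inl rfl, bz, X.prop, bz_mul bz⟩⟩


/-! ### Auxiliary normal-form machinery -/

/-- Normal forms: `none` is the zero, `some (v, w)` represents `v* · w`
where `w` is stored reversed. -/
abbrev BNF := Option (List (Fin 2) × List (Fin 2))

/-- Right action of a generator on a normal form. -/
def bnfStep : Bgen → BNF → BNF
  | _, none => none
  | Bgen.zero, some _ => none
  | Bgen.pi i, some (v, w) => some (v, i :: w)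
  | Bgen.pis j, some (v, []) => some (j :: v, [])
  | Bgen.pis j, some (v, i :: rest) => if i = j then some (v, rest) else none

/-- Action of a word on a normal form. -/
def bnfActL (x : List Bgen) (s : BNF) : BNF := x.foldl (fun s g => bnfStep g s) s

lemma bnfStep_none (g : Bgen) : bnfStep g none = none := by cases g <;> rfl

lemma bnfStep_zero (s : BNF) : bnfStep Bgen.zero s = none := by
  rcases s with _ | ⟨v, w⟩ <;> rfl

lemma bnfActL_none (x : List Bgen) : bnfActL x none = none := by
  induction x with
  | nil => rfl
  | cons g t ih =>
    show bnfActL t (bnfStep g none) = none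
    rw [bnfStep_none]; exact ih

lemma bnfActL_append (x y : List Bgen) (s : BNF) :
    bnfActL (x ++ y) s = bnfActL y (bnfActL x s) := by
  simp [bnfActL, List.foldl_append]

/-- Action of a free-monoid element. -/
def bnfAct (x : FreeMonoid Bgen) (s : BNF) : BNF := bnfActL (FreeMonoid.toList x) s

lemma bnfAct_mul (x y : FreeMonoid Bgen) (s : BNF) :
    bnfAct (x * y) s = bnfAct y (bnfAct x s) := by
  simp [bnfAct, FreeMonoid.toList_mul, bnfActL_append]

lemma bnfAct_of (g : Bgen) (s : BNF) : bnfAct (FreeMonoid.of g) s = bnfStep g s := rfl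

lemma bnfAct_one (s : BNF) : bnfAct 1 s = s := rfl

lemma bnfAct_none (x : FreeMonoid Bgen) : bnfAct x none = none := bnfActL_none _

lemma bnfAct_rel {x y : FreeMonoid Bgen} (h : ConGen.Rel Brel x y) :
    bnfAct x = bnfAct y := by
  induction h with
  | of a b hab =>
    funext s
    cases hab with
    | zero_mul x =>
      rw [bnfAct_mul, bnfAct_of, bnfStep_zero, bnfAct_none]
    | mul_zero x =>
      rw [bnfAct_mul, bnfAct_of, bnfAct_of, bnfStep_zero, bnfStep_zero]
    | pi_pis_same i =>
      rw [bnfAct_mul, bnfAct_of, bnfAct_of, bnfAct_one]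
      rcases s with _ | ⟨v, w⟩
      · rw [bnfStep_none, bnfStep_none]
      · show bnfStep (Bgen.pis i) (some (v, i :: w)) = some (v, w)
        show (if i = i then some (v, w) else none) = some (v, w)
        rw [if_pos rfl]
    | pi_pis_ne i j hij =>
      rw [bnfAct_mul, bnfAct_of, bnfAct_of, bnfAct_of, bnfStep_zero]
      rcases s with _ | ⟨v, w⟩
      · rw [bnfStep_none, bnfStep_none]
      · show bnfStep (Bgen.pis j) (some (v, i :: w)) = none
        show (if i = j then some (v, w) else none) = none
        rw [if_neg hij]
  | refl => rfl
  | symm _ ih => exact ih.symm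
  | trans _ _ ih1 ih2 => exact ih1.trans ih2
  | mul _ _ ih1 ih2 =>
    funext s
    rw [bnfAct_mul, bnfAct_mul, ih1, ih2]

/-- The normal form of an element of `B`. -/
def toBNF (b : Bmon) : BNF :=
  Con.liftOn b (fun x => bnfAct x (some ([], [])))
    (fun x y h => congrFun (bnfAct_rel h) _)

lemma toBNF_mk (x : FreeMonoid Bgen) :
    toBNF (Bcon.mk' x) = bnfAct x (some ([], [])) := rfl

lemma toBNF_coe (x : FreeMonoid Bgen) :
    toBNF (x : Bmon) = bnfAct x (some ([], [])) := rfl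

/-- Recompose a normal form into an element of `B`. -/
def recompose : BNF → Bmon
  | none => bz
  | some (v, w) =>
      bstar (FreeMonoid.ofList v) * ιF (FreeMonoid.ofList w.reverse)

lemma bpi_bpis_same (i : Fin 2) : bpi i * bpis i = 1 := by
  rw [bpi, bpis, ← map_mul]
  have h := (Con.eq Bcon).2
    (ConGen.Rel.of _ _ (Brel.pi_pis_same i))
  exact h.trans (map_one Bcon.mk')

lemma bpi_bpis_ne (i j : Fin 2) (h : i ≠ j) : bpi i * bpis j = bz := by
  rw [bpi, bpis, ← map_mul]
  exact (Con.eq Bcon).2 (ConGen.Rel.of _ _ (Brel.pi_pis_ne i j h))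

lemma bstar_ofList (l : List (Fin 2)) :
    bstar (FreeMonoid.ofList l) =
      Bcon.mk' (FreeMonoid.ofList (l.reverse.map Bgen.pis)) := rfl

lemma bstar_nil : bstar (FreeMonoid.ofList []) = 1 := by
  rw [bstar_ofList]
  exact map_one Bcon.mk'

lemma ofList_append' (a b : List Bgen) :
    FreeMonoid.ofList (a ++ b) = FreeMonoid.ofList a * FreeMonoid.ofList b := rfl

lemma bstar_cons (j : Fin 2) (v : List (Fin 2)) :
    bstar (FreeMonoid.ofList (j :: v)) = bstar (FreeMonoid.ofList v) * bpis j := by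
  rw [bstar_ofList, bstar_ofList]
  have h1 : (j :: v).reverse.map Bgen.pis
      = v.reverse.map Bgen.pis ++ [Bgen.pis j] := by simp
  rw [h1, ofList_append', map_mul]
  rfl

lemma iF_ofList_append (a b : List (Fin 2)) :
    ιF (FreeMonoid.ofList (a ++ b)) =
      ιF (FreeMonoid.ofList a) * ιF (FreeMonoid.ofList b) := by
  have : FreeMonoid.ofList (a ++ b)
      = FreeMonoid.ofList a * FreeMonoid.ofList b := rfl
  rw [this, map_mul]

lemma iF_nil : ιF (FreeMonoid.ofList []) = 1 := map_one ιF

lemma iF_single (i : Fin 2) : ιF (FreeMonoid.ofList [i]) = bpi i := rfl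

lemma recompose_step (g : Bgen) (s : BNF) :
    recompose (bnfStep g s) = recompose s * Bcon.mk' (FreeMonoid.of g) := by
  rcases s with _ | ⟨v, w⟩
  · rw [bnfStep_none]
    show bz = bz * _
    rw [bz_mul]
  · cases g with
    | zero =>
      rw [bnfStep_zero]
      show bz = _ * bz
      rw [mul_bz]
    | pi i =>
      show recompose (some (v, i :: w)) = recompose (some (v, w)) * bpi i
      show bstar _ * ιF (FreeMonoid.ofList ((i :: w).reverse))
          = bstar _ * ιF (FreeMonoid.ofList w.reverse) * bpi i
      have h1 : (i :: w).reverse = w.reverse ++ [i] := by simp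
      rw [h1, iF_ofList_append, iF_single, ← mul_assoc]
    | pis j =>
      match w with
      | [] =>
        show recompose (some (j :: v, [])) = recompose (some (v, [])) * bpis j
        show bstar (FreeMonoid.ofList (j :: v)) * ιF (FreeMonoid.ofList ([] : List (Fin 2)))
            = bstar (FreeMonoid.ofList v) * ιF (FreeMonoid.ofList ([] : List (Fin 2))) * bpis j
        rw [iF_nil, mul_one, mul_one, bstar_cons]
      | i :: rest =>
        show recompose (if i = j then some (v, rest) else none)
            = recompose (some (v, i :: rest)) * bpis j
        have hrw : recompose (some (v, i :: rest)) * bpis j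
            = bstar (FreeMonoid.ofList v) * ιF (FreeMonoid.ofList rest.reverse)
                * (bpi i * bpis j) := by
          show bstar (FreeMonoid.ofList v) * ιF (FreeMonoid.ofList (i :: rest).reverse) * bpis j = _
          have h1 : (i :: rest).reverse = rest.reverse ++ [i] := by simp
          rw [h1, iF_ofList_append, iF_single, ← mul_assoc, mul_assoc _ _ (bpis j)]
        by_cases h : i = j
        · subst h
          rw [if_pos rfl, hrw, bpi_bpis_same, mul_one]
          rfl
        · rw [if_neg h, hrw, bpi_bpis_ne i j h, mul_bz]
          rfl

lemma recompose_actL (x : List Bgen) (s : BNF) :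
    recompose (bnfActL x s) = recompose s * Bcon.mk' (FreeMonoid.ofList x) := by
  induction x generalizing s with
  | nil =>
    show recompose s = recompose s * Bcon.mk' 1
    rw [map_one, mul_one]
  | cons g t ih =>
    have h1 : bnfActL (g :: t) s = bnfActL t (bnfStep g s) := rfl
    have h2 : FreeMonoid.ofList (g :: t)
        = FreeMonoid.of g * FreeMonoid.ofList t := rfl
    rw [h1, ih, recompose_step, h2, map_mul, mul_assoc]

lemma recompose_init : recompose (some (([] : List (Fin 2)), ([] : List (Fin 2)))) = 1 := by
  show bstar (FreeMonoid.ofList []) * ιF (FreeMonoid.ofList ([] : List (Fin 2))) = 1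
  rw [bstar_nil, iF_nil, mul_one]

lemma recompose_toBNF (b : Bmon) : recompose (toBNF b) = b := by
  induction b using Con.induction_on with
  | H x =>
    rw [toBNF_coe]
    show recompose (bnfActL (FreeMonoid.toList x) (some ([], []))) = _
    rw [recompose_actL, recompose_init, one_mul]
    show Bcon.mk' (FreeMonoid.ofList (FreeMonoid.toList x)) = _
    rfl

lemma bnfActL_pis (l : List (Fin 2)) (v : List (Fin 2)) :
    bnfActL (l.map Bgen.pis) (some (v, [])) = some (l.reverse ++ v, []) := by
  induction l generalizing v with
  | nil => simp [bnfActL]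
  | cons j t ih =>
    have h1 : bnfActL ((j :: t).map Bgen.pis) (some (v, []))
        = bnfActL (t.map Bgen.pis) (some (j :: v, [])) := rfl
    rw [h1, ih]
    simp

lemma bnfActL_pi (l : List (Fin 2)) (v w : List (Fin 2)) :
    bnfActL (l.map Bgen.pi) (some (v, w)) = some (v, l.reverse ++ w) := by
  induction l generalizing w with
  | nil => simp [bnfActL]
  | cons i t ih =>
    have h1 : bnfActL ((i :: t).map Bgen.pi) (some (v, w))
        = bnfActL (t.map Bgen.pi) (some (v, i :: w)) := rfl
    rw [h1, ih]
    simp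

lemma toBNF_factor (v w : FreeMonoid (Fin 2)) :
    toBNF (bstar v * ιF w)
      = some (FreeMonoid.toList v, (FreeMonoid.toList w).reverse) := by
  have hmul : bstar v * ιF w
      = Bcon.mk' (FreeMonoid.ofList
          ((FreeMonoid.toList v).reverse.map Bgen.pis
            ++ (FreeMonoid.toList w).map Bgen.pi)) := by
    have h1 : bstar v * ιF w
        = Bcon.mk' (FreeMonoid.ofList ((FreeMonoid.toList v).reverse.map Bgen.pis)
            * FreeMonoid.map Bgen.pi w) := (map_mul Bcon.mk' _ _).symm
    rw [h1]
    rfl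
  rw [hmul, toBNF_mk]
  show bnfActL ((FreeMonoid.toList v).reverse.map Bgen.pis
      ++ (FreeMonoid.toList w).map Bgen.pi) (some ([], [])) = _
  rw [bnfActL_append, bnfActL_pis, bnfActL_pi]
  simp

/-- Every non-zero element of `B` can be written uniquely as `v* w` with
`v, w` in the free monoid `F` on π₁, π₂. -/
theorem bmon_unique_factorization (b : Bmon) (hb : b ≠ bz) :
    ∃! vw : FreeMonoid (Fin 2) × FreeMonoid (Fin 2),
      b = bstar vw.1 * ιF vw.2 := by
  rcases hnf : toBNF b with _ | ⟨v, w⟩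
  · exfalso
    apply hb
    have := recompose_toBNF b
    rw [hnf] at this
    exact this.symm
  · refine ⟨(FreeMonoid.ofList v, FreeMonoid.ofList w.reverse), ?_, ?_⟩
    · have := recompose_toBNF b
      rw [hnf] at this
      exact this.symm
    · rintro ⟨y1, y2⟩ hy
      have h1 : toBNF b = some (FreeMonoid.toList y1, (FreeMonoid.toList y2).reverse) := by
        rw [hy]; exact toBNF_factor y1 y2
      rw [hnf] at h1
      injection h1 with h1
      have hv : FreeMonoid.toList y1 = v := ((Prod.mk.injEq _ _ _ _ ▸ h1).1).symm
      have hw : (FreeMonoid.toList y2).reverse = w := ((Prod.mk.injEq _ _ _ _ ▸ h1).2).symm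
      have hw2 : FreeMonoid.toList y2 = w.reverse := by
        rw [← hw, List.reverse_reverse]
      simp only [Prod.mk.injEq]
      constructor
      · rw [← hv]; rfl
      · rw [← hw2]; rfl
end

section
/- If A ∈ T and w ∈ F, then A ≡ w if and only if every non-zero element of β(A) ∈ S has the form v* v w for some v ∈ F. -/
open scoped Pointwise

/-- The free magma `T` on the free monoid `F` on π₁, π₂: finite nonempty ordered
binary trees with leaves colored by elements of `F`. -/
inductive Tm : Type
  | leaf : FreeMonoid (Fin 2) → Tm
  | node : Tm → Tm → Tm

/-- The action of the generator πᵢ on `T`: it picks out the `i`-th subtree of a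
node, and acts by left multiplication on (the color of) a single leaf. -/
def pact (i : Fin 2) : Tm → Tm
  | .leaf w => .leaf (FreeMonoid.of i * w)
  | .node A B => if i = 0 then A else B

/-- The left action of a word `w ∈ F` on `T`, applying the symbols of `w` one at
a time from right to left. -/
def wact (w : FreeMonoid (Fin 2)) (A : Tm) : Tm :=
  (FreeMonoid.toList w).foldr pact A

/-- The product on `T`: `A * B` replaces each leaf of `A` of color `w` by `w • B`. -/
def tmul : Tm → Tm → Tm
  | .leaf w, B => wact w B
  | .node A₁ A₂, B => .node (tmul A₁ B) (tmul A₂ B)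

/-- The identity of `T`: a single leaf colored by the empty word. -/
def tone : Tm := .leaf 1

/-- The list of leaves of a tree `A ∈ T`, in order, recorded as pairs
`(path, color)`: the path from the root to the leaf is described by the word
`path` read from right to left, and `color` is the color of the leaf. -/
def tleaves : Tm → List (FreeMonoid (Fin 2) × FreeMonoid (Fin 2))
  | .leaf w => [(1, w)]
  | .node A B =>
      ((tleaves A).map fun pc => (pc.1 * FreeMonoid.of 0, pc.2)) ++
        ((tleaves B).map fun pc => (pc.1 * FreeMonoid.of 1, pc.2))

/-- One expansion move on `T`: some leaf of color `w` is replaced by the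
two-leaf tree with colors `π₁ w`, `π₂ w` in order. -/
inductive Exp : Tm → Tm → Prop
  | expand (w : FreeMonoid (Fin 2)) :
      Exp (.leaf w) (.node (.leaf (FreeMonoid.of 0 * w)) (.leaf (FreeMonoid.of 1 * w)))
  | left {A A' : Tm} (B : Tm) : Exp A A' → Exp (.node A B) (.node A' B)
  | right (A : Tm) {B B' : Tm} : Exp B B' → Exp (.node A B) (.node A B')

/-- The equivalence relation `≡` on `T` generated by expansion moves. -/
def TEquiv : Tm → Tm → Prop := Relation.EqvGen Exp

/-- `A` is reduced if no retraction move applies to it, i.e. it is not the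
result of an expansion move. -/
def TReduced (A : Tm) : Prop := ∀ B : Tm, ¬ Exp B A

/-- The branch homomorphism `β : T → S`: the magma homomorphism sending a leaf
of color `w` to `{0, w}`. -/
noncomputable def βmap : Tm → Smon
  | .leaf w => ⟨{bz, ιF w}, Or.inl rfl⟩
  | .node A B => SgS (βmap A) (βmap B)

/-!
Represent `B` by partial maps on words (`genAct`). Under this action `p* c` sends `c` to `p`,
so the elements `p* c` with `p, c ∈ F` are nonzero and determine `p` and `c`. The nonzero part
of `β(A)` consists of the elements `p* c` for the leaves of `A`, with path `p` and color `c`.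
On the other hand `A ≡ w` exactly when every leaf satisfies `c = p w`: this condition holds for
the leaf `w`, is invariant under expansion moves, and, when it holds for `A = (A₁, A₂)`, it holds
for `A₁` and `π₁ w` and for `A₂` and `π₂ w`, so that by induction `A ≡ (π₁ w, π₂ w) ≡ w`.
-/

theorem Relation.EqvGen.map {α β : Type*} {r : α → α → Prop} {s : β → β → Prop} (f : α → β)
    (hf : ∀ a b, r a b → s (f a) (f b)) {a b : α} (h : EqvGen r a b) : EqvGen s (f a) (f b) :=
  ((EqvGen.is_equivalence s).comap f).eqvGen_iff.mp
    (h.mono (fun a b hab => EqvGen.rel _ _ (hf a b hab)))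

theorem Relation.EqvGen.iff_of_rel_iff {α : Type*} {r : α → α → Prop} {P : α → Prop}
    (hP : ∀ a b, r a b → (P a ↔ P b)) {a b : α} (h : EqvGen r a b) : P a ↔ P b :=
  ((show Equivalence Iff from ⟨Iff.refl, Iff.symm, Iff.trans⟩).comap P).eqvGen_iff.mp
    (h.mono hP)

@[simp]
theorem Function.End.mul_apply {α : Type*} (f g : Function.End α) (a : α) :
    (f * g) a = f (g a) :=
  rfl

@[simp]
theorem Function.End.one_apply {α : Type*} (a : α) : (1 : Function.End α) a = a :=
  rfl

/-- `B` acts on `Option (List (Fin 2))`: `πᵢ` deletes a final letter `i` (and is undefined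
otherwise), `πᵢ*` appends `i`, and `0` is nowhere defined. -/
def genAct : Bgen → Function.End (Option (List (Fin 2)))
  | .pi i => fun x => x.bind fun l => if l.getLast? = some i then some l.dropLast else none
  | .pis i => Option.map (· ++ [i])
  | .zero => fun _ => none

theorem genAct_none (a : Bgen) : genAct a none = none := by
  cases a <;> rfl

theorem freeMonoid_lift_genAct_none (x : FreeMonoid Bgen) :
    FreeMonoid.lift genAct x none = none := by
  induction x using FreeMonoid.inductionOn' with
  | one => rfl
  | of_mul a x ih => rw [map_mul, Function.End.mul_apply, ih, FreeMonoid.lift_eval_of, genAct_none]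

theorem freeMonoid_lift_genAct_eq_of_brel {x y : FreeMonoid Bgen} (h : Brel x y) :
    FreeMonoid.lift genAct x = FreeMonoid.lift genAct y := by
  funext t
  cases h <;>
    simp only [map_mul, map_one, FreeMonoid.lift_eval_of, Function.End.mul_apply,
      Function.End.one_apply]
  case zero_mul => rfl
  case mul_zero => exact freeMonoid_lift_genAct_none _
  case pi_pis_same => cases t <;> simp [genAct]
  case pi_pis_ne hij => cases t <;> simp [genAct, hij.symm]

noncomputable def branchAct : Bmon →* Function.End (Option (List (Fin 2))) :=
  Bcon.lift (FreeMonoid.lift genAct)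
    (Con.conGen_le.2 fun _ _ h => (Con.ker_rel _).2 (freeMonoid_lift_genAct_eq_of_brel h))

theorem branchAct_bz (t : Option (List (Fin 2))) : branchAct bz t = none :=
  rfl

theorem branchAct_none (b : Bmon) : branchAct b none = none := by
  induction b using Con.induction_on with
  | H x => exact freeMonoid_lift_genAct_none x

theorem ιF_of (i : Fin 2) : ιF (FreeMonoid.of i) = bpi i :=
  rfl

theorem branchAct_bpi (i : Fin 2) : branchAct (bpi i) = genAct (.pi i) :=
  rfl

theorem branchAct_bpis (i : Fin 2) : branchAct (bpis i) = genAct (.pis i) :=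
  rfl

theorem branchAct_ιF_append (c : FreeMonoid (Fin 2)) (l : List (Fin 2)) :
    branchAct (ιF c) (some (l ++ c.toList)) = some l := by
  induction c using FreeMonoid.inductionOn' generalizing l with
  | one => simp
  | of_mul a c ih =>
    rw [map_mul, map_mul, ιF_of, Function.End.mul_apply, FreeMonoid.toList_of_mul,
      ← List.singleton_append, ← List.append_assoc, ih, branchAct_bpi]
    simp [genAct]

theorem eq_append_of_branchAct_ιF {c : FreeMonoid (Fin 2)} {l m : List (Fin 2)}
    (h : branchAct (ιF c) (some l) = some m) : l = m ++ c.toList := by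
  induction c using FreeMonoid.inductionOn' generalizing m with
  | one => simpa using h
  | of_mul a c ih =>
    rw [map_mul, map_mul, ιF_of, Function.End.mul_apply, branchAct_bpi] at h
    rcases hc : branchAct (ιF c) (some l) with _ | m'
    · simp [hc, genAct_none] at h
    · simp only [hc, genAct, Option.bind_some, Option.ite_none_right_eq_some,
        Option.some.injEq] at h
      rw [ih hc, ← List.dropLast_append_getLast? a h.1, h.2]
      simp

theorem bstar_one : bstar 1 = 1 :=
  rfl

theorem bstar_of (i : Fin 2) : bstar (FreeMonoid.of i) = bpis i :=
  rfl

theorem bstar_mul (u v : FreeMonoid (Fin 2)) : bstar (u * v) = bstar v * bstar u := by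
  simp only [bstar, FreeMonoid.toList_mul, List.reverse_append, List.map_append,
    FreeMonoid.ofList_append, map_mul]

theorem branchAct_bstar (v : FreeMonoid (Fin 2)) (l : List (Fin 2)) :
    branchAct (bstar v) (some l) = some (l ++ v.toList) := by
  induction v using FreeMonoid.inductionOn' generalizing l with
  | one => simp [bstar_one]
  | of_mul a v ih =>
    rw [bstar_mul, map_mul, Function.End.mul_apply, bstar_of, branchAct_bpis]
    simp [genAct, ih]

theorem branchAct_bstar_mul_ιF (v c : FreeMonoid (Fin 2)) :
    branchAct (bstar v * ιF c) (some c.toList) = some v.toList := by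
  rw [map_mul, Function.End.mul_apply, ← List.nil_append c.toList, branchAct_ιF_append,
    branchAct_bstar, List.nil_append]

theorem bstar_mul_ιF_ne_bz (v c : FreeMonoid (Fin 2)) : bstar v * ιF c ≠ bz := fun h => by
  simpa [h, branchAct_bz] using branchAct_bstar_mul_ιF v c

theorem exists_eq_append_of_bstar_mul_ιF_eq {v c v' c' : FreeMonoid (Fin 2)}
    (h : bstar v * ιF c = bstar v' * ιF c') :
    ∃ y, c.toList = y ++ c'.toList ∧ v.toList = y ++ v'.toList := by
  have hv := branchAct_bstar_mul_ιF v c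
  rw [h, map_mul, Function.End.mul_apply] at hv
  rcases hc : branchAct (ιF c') (some c.toList) with _ | y
  · simp [hc, branchAct_none] at hv
  · rw [hc, branchAct_bstar, Option.some.injEq] at hv
    exact ⟨y, eq_append_of_branchAct_ιF hc, hv.symm⟩

theorem bstar_mul_ιF_inj {v c v' c' : FreeMonoid (Fin 2)} :
    bstar v * ιF c = bstar v' * ιF c' ↔ v = v' ∧ c = c' := by
  refine ⟨fun h => ?_, fun ⟨hv, hc⟩ => hv ▸ hc ▸ rfl⟩
  obtain ⟨y, hc, hv⟩ := exists_eq_append_of_bstar_mul_ιF_eq h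
  obtain ⟨y', hc', -⟩ := exists_eq_append_of_bstar_mul_ιF_eq h.symm
  have hy : y = [] := List.eq_nil_of_length_eq_zero <| by
    have := congrArg List.length hc
    have := congrArg List.length hc'
    simp only [List.length_append] at *
    omega
  subst hy
  exact ⟨FreeMonoid.toList.injective hv, FreeMonoid.toList.injective hc⟩

theorem exists_bstar_mul_ιF_eq_iff {p c w : FreeMonoid (Fin 2)} :
    (∃ v, bstar p * ιF c = bstar v * ιF (v * w)) ↔ c = p * w := by
  simp only [bstar_mul_ιF_inj]
  exact ⟨fun ⟨v, hp, hc⟩ => hp ▸ hc, fun hc => ⟨p, rfl, hc⟩⟩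

def leafBranches (A : Tm) : Set Bmon :=
  (fun pc => bstar pc.1 * ιF pc.2) '' {pc | pc ∈ tleaves A}

theorem leafBranches_leaf (u : FreeMonoid (Fin 2)) : leafBranches (.leaf u) = {ιF u} := by
  simp [leafBranches, tleaves, bstar_one]

theorem leafBranches_node (A B : Tm) :
    leafBranches (.node A B) =
      (bpis 0 * ·) '' leafBranches A ∪ (bpis 1 * ·) '' leafBranches B := by
  ext b
  simp [leafBranches, tleaves, or_and_right, exists_or, bstar_mul, bstar_of, mul_assoc]

theorem pair_bz_mul_insert_bz (x : Bmon) (S : Set Bmon) :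
    ({bz, x} : Set Bmon) * insert bz S = insert bz ((x * ·) '' S) := by
  ext b
  simp only [Set.mem_mul, Set.mem_insert_iff, Set.mem_singleton_iff, Set.mem_image]
  constructor
  · rintro ⟨y, rfl | rfl, z, rfl | hz, rfl⟩
    exacts [.inl (bz_mul _), .inl (bz_mul _), .inl (mul_bz _), .inr ⟨z, hz, rfl⟩]
  · rintro (rfl | ⟨z, hz, rfl⟩)
    exacts [⟨bz, .inl rfl, bz, .inl rfl, bz_mul _⟩, ⟨x, .inr rfl, z, .inr hz, rfl⟩]

theorem βmap_val (A : Tm) : (βmap A).val = insert bz (leafBranches A) := by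
  induction A with
  | leaf u => simp [βmap, leafBranches_leaf]
  | node A B ihA ihB =>
    simp only [βmap, SgS, ihA, ihB, pair_bz_mul_insert_bz, leafBranches_node,
      Set.insert_union, Set.union_insert, Set.insert_idem]

def PathColored (A : Tm) (w : FreeMonoid (Fin 2)) : Prop :=
  ∀ pc ∈ tleaves A, pc.2 = pc.1 * w

theorem pathColored_leaf {u w : FreeMonoid (Fin 2)} : PathColored (.leaf u) w ↔ u = w := by
  simp [PathColored, tleaves]

theorem pathColored_node {A B : Tm} {w : FreeMonoid (Fin 2)} :
    PathColored (.node A B) w ↔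
      PathColored A (FreeMonoid.of 0 * w) ∧ PathColored B (FreeMonoid.of 1 * w) := by
  simp only [PathColored, tleaves, List.mem_append, List.mem_map, or_imp, forall_and,
    forall_exists_index, and_imp, forall_apply_eq_imp_iff₂, mul_assoc]

theorem Exp.pathColored_iff {A B : Tm} (h : Exp A B) (w : FreeMonoid (Fin 2)) :
    PathColored A w ↔ PathColored B w := by
  induction h generalizing w with
  | expand u => simp [pathColored_node, pathColored_leaf]
  | left B _ ih => simp only [pathColored_node, ih]
  | right A _ ih => simp only [pathColored_node, ih]

theorem tequiv_node {A A' B B' : Tm} (hA : TEquiv A A') (hB : TEquiv B B') :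
    TEquiv (.node A B) (.node A' B') :=
  .trans _ _ _ (hA.map (Tm.node · B) fun _ _ => Exp.left B)
    (hB.map (Tm.node A') fun _ _ => Exp.right A')

theorem tequiv_leaf_iff_pathColored {A : Tm} {w : FreeMonoid (Fin 2)} :
    TEquiv A (.leaf w) ↔ PathColored A w := by
  refine ⟨fun h => (h.iff_of_rel_iff fun _ _ e => e.pathColored_iff w).2 (pathColored_leaf.2 rfl),
    fun h => ?_⟩
  induction A generalizing w with
  | leaf u => exact pathColored_leaf.1 h ▸ .refl _
  | node A B ihA ihB =>
    obtain ⟨hA, hB⟩ := pathColored_node.1 h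
    exact .trans _ _ _ (tequiv_node (ihA hA) (ihB hB)) (.symm _ _ (.rel _ _ (Exp.expand w)))

/-- For `A ∈ T` and `w ∈ F`, `A ≡ w` iff every non-zero element of `β(A)` has
the form `v* v w` for some `v ∈ F`. -/
theorem tequiv_leaf_iff_branches (A : Tm) (w : FreeMonoid (Fin 2)) :
    TEquiv A (.leaf w) ↔
      ∀ b ∈ (βmap A).val, b ≠ bz →
        ∃ v : FreeMonoid (Fin 2), b = bstar v * ιF (v * w) := by
  have leafBranches_ne_bz : ∀ b ∈ leafBranches A, b ≠ bz := by
    rintro _ ⟨pc, -, rfl⟩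
    exact bstar_mul_ιF_ne_bz _ _
  calc TEquiv A (.leaf w) ↔ PathColored A w := tequiv_leaf_iff_pathColored
    _ ↔ ∀ b ∈ leafBranches A, ∃ v, b = bstar v * ιF (v * w) := by
      simp only [PathColored, leafBranches, Set.forall_mem_image, Set.mem_ofPred_eq,
        exists_bstar_mul_ιF_eq_iff]
    _ ↔ _ := by
      rw [βmap_val, Set.forall_mem_insert]
      simp +contextual [leafBranches_ne_bz]
end
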